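/- Let K(t,x;κ,λ) = (λ²/4) I₀(√(λ²((κt)² − x²)/(2κ))) for |x| ≤ κt and 0 otherwise. Then the space-time convolution (1 ⋆ K)(t,x) = ∫₀ᵗ∫_ℝ K(s,y) dy ds equals cosh(|λ|√(κ/2) t) − 1, for all t ≥ 0 and x ∈ ℝ. -/

import Mathlib

open Real MeasureTheory

/-- Modified Bessel function of the first kind of order zero:
`I₀(z) = Σ_{k≥0} (z²/4)ᵏ/(k!)²`. -/
noncomputable def besselI0 (z : ℝ) : ℝ :=
  ∑' k : ℕ, (z ^ 2 / 4) ^ k / (k.factorial : ℝ) ^ 2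

/-- `K(t,x) = (λ²/4) I₀(√(λ²((κt)² − x²)/(2κ)))` on `|x| ≤ κt`, zero otherwise. -/
noncomputable def Kker (κ lam t x : ℝ) : ℝ :=
  if |x| ≤ κ * t then
    lam ^ 2 / 4 * besselI0 (Real.sqrt (lam ^ 2 * ((κ * t) ^ 2 - x ^ 2) / (2 * κ)))
  else 0

/-!
Expanding `I₀` in its power series, the `k`-th term of `K(s, ·)` is a multiple of
`((κs)² − y²)ᵏ`, whose integral over `[-κs, κs]` is a Beta integral
`(2κs)^(2k+1) (k!)² / (2k+1)!`. The factorials cancel and what remains is the `k`-th term of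
`c sinh(cs)` with `c = |λ| √(κ/2)`, so `∫ K(s, y) dy = c sinh(cs) = ∂ₛ cosh(cs)`.
-/

open scoped Nat

theorem integral_pow_mul_one_sub_pow (m n : ℕ) :
    ∫ x in (0 : ℝ)..1, x ^ m * (1 - x) ^ n = m ! * n ! / (m + n + 1)! := by
  have hB := Complex.Gamma_mul_Gamma_eq_betaIntegral (s := m + 1) (t := n + 1)
    (by simp; positivity) (by simp; positivity)
  have hsum : (m + 1 : ℂ) + (n + 1) = ((m + n + 1 : ℕ) : ℂ) + 1 := by push_cast; ring
  rw [hsum, Complex.Gamma_nat_eq_factorial, Complex.Gamma_nat_eq_factorial,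
    Complex.Gamma_nat_eq_factorial] at hB
  have hbeta : Complex.betaIntegral (m + 1) (n + 1)
      = ((∫ x in (0 : ℝ)..1, x ^ m * (1 - x) ^ n : ℝ) : ℂ) := by
    rw [Complex.betaIntegral, ← intervalIntegral.integral_ofReal]
    refine intervalIntegral.integral_congr fun x _ => ?_
    simp only [add_sub_cancel_right, Complex.cpow_natCast]
    push_cast
    rfl
  rw [hbeta] at hB
  rw [eq_div_iff (Nat.cast_ne_zero.mpr (Nat.factorial_ne_zero _))]
  exact_mod_cast (hB.trans (mul_comm _ _)).symm

theorem integral_sq_sub_sq_pow (a : ℝ) (k : ℕ) :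
    ∫ y in (-a)..a, (a ^ 2 - y ^ 2) ^ k = (2 * a) ^ (2 * k + 1) * (k ! ^ 2 / (2 * k + 1)!) := by
  have hsub := intervalIntegral.smul_integral_comp_mul_add (a := 0) (b := 1)
    (fun y : ℝ => (a ^ 2 - y ^ 2) ^ k) (2 * a) (-a)
  have hpoly : ∀ x : ℝ, (a ^ 2 - (2 * a * x + -a) ^ 2) ^ k
      = (2 * a) ^ (2 * k) * (x ^ k * (1 - x) ^ k) := fun x => by
    rw [pow_mul, ← mul_pow, ← mul_pow]; ring
  simp only [hpoly, intervalIntegral.integral_const_mul, integral_pow_mul_one_sub_pow,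
    mul_zero, mul_one, zero_add, smul_eq_mul] at hsub
  rw [show 2 * a + -a = a by ring, ← two_mul] at hsub
  rw [← hsub]
  ring

theorem hasSum_besselI0 (z : ℝ) :
    HasSum (fun k : ℕ => (z ^ 2 / 4) ^ k / (k ! : ℝ) ^ 2) (besselI0 z) := by
  refine (Summable.of_nonneg_of_le (fun k => by positivity) (fun k => ?_)
    (Real.summable_pow_div_factorial (z ^ 2 / 4))).hasSum
  gcongr
  exact le_self_pow₀ (Nat.one_le_cast.mpr k.factorial_pos) two_ne_zero

theorem hasSum_besselI0_mul_sqrt (μ : ℝ) {w : ℝ} (hw : 0 ≤ w) :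
    HasSum (fun k : ℕ => (μ ^ 2 / 4) ^ k / (k ! : ℝ) ^ 2 * w ^ k) (besselI0 (μ * √w)) := by
  convert hasSum_besselI0 (μ * √w) using 2 with k
  rw [mul_pow, sq_sqrt hw, mul_div_right_comm, mul_pow]
  ring

theorem mul_integral_besselI0_mul_sqrt_sq_sub_sq (μ a : ℝ) :
    μ * ∫ y in (-a)..a, besselI0 (μ * √(a ^ 2 - y ^ 2)) = 2 * sinh (μ * a) := by
  set C : ℕ → ℝ := fun k => (μ ^ 2 / 4) ^ k / (k ! : ℝ) ^ 2
  have hbound : ∀ y ∈ Set.uIoc (-a) a, 0 ≤ a ^ 2 - y ^ 2 ∧ a ^ 2 - y ^ 2 ≤ a ^ 2 :=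
    fun y hy => by
      rw [Set.mem_uIoc] at hy
      constructor <;> rcases hy with ⟨h₁, h₂⟩ | ⟨h₁, h₂⟩ <;> nlinarith
  have hint : HasSum (fun k => ∫ y in (-a)..a, C k * (a ^ 2 - y ^ 2) ^ k)
      (∫ y in (-a)..a, besselI0 (μ * √(a ^ 2 - y ^ 2))) := by
    refine intervalIntegral.hasSum_integral_of_dominated_convergence
      (fun k _ => ((μ * a) ^ 2 / 4) ^ k / (k ! : ℝ) ^ 2) (fun k => by fun_prop) ?_
      (.of_forall fun _ _ => (hasSum_besselI0 (μ * a)).summable) intervalIntegrable_const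
      (.of_forall fun y hy => hasSum_besselI0_mul_sqrt μ (hbound y hy).1)
    refine fun k => .of_forall fun y hy => ?_
    obtain ⟨h₀, h₁⟩ := hbound y hy
    rw [Real.norm_of_nonneg (by positivity), mul_pow, mul_div_right_comm, mul_pow,
      mul_div_right_comm]
    gcongr
  have hpow : ∀ k : ℕ,
      μ * (μ ^ 2 / 4) ^ k * (2 * a) ^ (2 * k + 1) = 2 * (μ * a) ^ (2 * k + 1) := fun k => by
    have hbase : (μ ^ 2 / 4) ^ k * ((2 * a) ^ 2) ^ k = ((μ * a) ^ 2) ^ k := by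
      rw [← mul_pow]; ring
    rw [pow_succ _ (2 * k), pow_succ _ (2 * k), pow_mul, pow_mul]
    linear_combination (2 * μ * a) * hbase
  refine (hint.mul_left μ).unique (((hasSum_sinh (μ * a)).mul_left 2).congr_fun fun k => ?_)
  simp only [C, intervalIntegral.integral_const_mul, integral_sq_sub_sq_pow, mul_div_assoc',
    ← hpow]
  field_simp

theorem integral_Kker (lam : ℝ) {κ s : ℝ} (hκ : 0 < κ) (hs : 0 ≤ s) :
    ∫ y, Kker κ lam s y = |lam| * √(κ / 2) * sinh (|lam| * √(κ / 2) * s) := by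
  set c := |lam| * √(κ / 2)
  set μ := c / κ
  have hμ : 0 ≤ μ := by positivity
  have hμsq : lam ^ 2 / (2 * κ) = μ ^ 2 := by
    rw [div_pow, mul_pow, sq_abs, sq_sqrt (by positivity)]
    field_simp
  have hμκ : μ * κ = c := div_mul_cancel₀ c hκ.ne'
  have hK : (fun y => Kker κ lam s y) = (Set.Icc (-(κ * s)) (κ * s)).indicator
      fun y => lam ^ 2 / 4 * besselI0 (μ * √((κ * s) ^ 2 - y ^ 2)) := by
    ext y
    simp only [Kker, Set.indicator_apply, Set.mem_Icc, ← abs_le]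
    rw [mul_div_right_comm, hμsq, sqrt_mul (sq_nonneg μ), sqrt_sq hμ]
  have hB := mul_integral_besselI0_mul_sqrt_sq_sub_sq μ (κ * s)
  rw [← mul_assoc, hμκ] at hB
  rw [hK, integral_indicator measurableSet_Icc, integral_Icc_eq_integral_Ioc,
    ← intervalIntegral.integral_of_le (by linarith [mul_nonneg hκ.le hs]),
    intervalIntegral.integral_const_mul]
  have hlam : lam ^ 2 = μ ^ 2 * (2 * κ) := (div_eq_iff (by positivity)).mp hμsq
  set J := ∫ y in -(κ * s)..κ * s, besselI0 (μ * √((κ * s) ^ 2 - y ^ 2))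
  linear_combination (κ * μ / 2) * hB + J / 4 * hlam + sinh (c * s) * hμκ

theorem Kker_spacetime_integral_general (κ lam t : ℝ) (hκ : 0 < κ) (ht : 0 ≤ t) :
    ∫ s in (0:ℝ)..t, ∫ y : ℝ, Kker κ lam s y
      = Real.cosh (|lam| * Real.sqrt (κ / 2) * t) - 1 := by
  set c := |lam| * √(κ / 2)
  have hinner : Set.EqOn (fun s => ∫ y, Kker κ lam s y) (fun s => c * sinh (c * s))
      (Set.uIcc 0 t) := fun s hs => integral_Kker lam hκ (Set.uIcc_of_le ht ▸ hs).1
  have hderiv : ∀ s ∈ Set.uIcc 0 t, HasDerivAt (fun s => cosh (c * s)) (c * sinh (c * s)) s :=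
    fun s _ => by simpa [mul_comm] using ((hasDerivAt_id s).const_mul c).cosh
  rw [intervalIntegral.integral_congr hinner,
    intervalIntegral.integral_eq_sub_of_hasDerivAt hderiv
      (Continuous.intervalIntegrable (by fun_prop) _ _)]
  simp

theorem Kker_spacetime_integral (κ lam t x : ℝ) (hκ : 0 < κ) (hlam : lam ≠ 0) (ht : 0 ≤ t) :
    ∫ s in (0:ℝ)..t, ∫ y : ℝ, Kker κ lam s y
      = Real.cosh (|lam| * Real.sqrt (κ / 2) * t) - 1 :=
  Kker_spacetime_integral_general κ lam t hκ ht
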